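/- Let v : ℕ → ℝ be a strictly decreasing sequence with prefix sums u, linear cost c(j) = λ·j + δ with λ > 0, and threshold C = v(K)/λ. Then for every index j > K, there exists i < j (namely i = j - 1) with (u(j) - u(i))/(c(j) - c(i)) < C, so j is unmarked by Algorithm 1. Consequently, the maximum marked index output by the algorithm is exactly K. -/
import Mathlib

private lemma v_anti (v : ℕ → ℝ) (hv : ∀ s, 1 ≤ s → v (s + 1) < v s) :
    ∀ a b, 1 ≤ a → a < b → v b < v a := by
  intro a b ha hab
  induction b with
  | zero => omega
  | succ n ih =>
    rcases Nat.lt_or_ge a n with h | h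
    · exact lt_trans (hv n (by omega)) (ih h)
    · have : a = n := by omega
      subst this
      exact hv a ha

/-- With strictly decreasing `v`, prefix sums `u`, linear cost `c j = λ j + δ`
(`λ > 0`) and threshold `C = v K / λ` with `1 ≤ K < N`, every `j > K` is
unmarked by Algorithm 1 (witnessed by `i = j - 1`), and hence the maximum
marked index output by the algorithm is exactly `K`. -/
theorem algorithm1_output_eq_K (v : ℕ → ℝ)
    (hv : ∀ s, 1 ≤ s → v (s + 1) < v s)
    (lam δ : ℝ) (hlam : 0 < lam)
    (u c : ℕ → ℝ) (hu : ∀ k, u k = ∑ s ∈ Finset.Icc 1 k, v s)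
    (hc : ∀ j, c j = lam * j + δ)
    (N K : ℕ) (hK : 1 ≤ K) (hKN : K < N) (C : ℝ) (hC : C = v K / lam) :
    (∀ j, K < j → j ≤ N → (u j - u (j - 1)) / (c j - c (j - 1)) < C) ∧
    IsGreatest
      {j | 1 ≤ j ∧ j ≤ N ∧ ∀ i, 1 ≤ i → i < j → C ≤ (u j - u i) / (c j - c i)}
      K := by
  have hu' : ∀ k, u k = ∑ s ∈ Finset.Ioc 0 k, v s := by
    intro k; rw [hu]; congr 1
  have hdiff : ∀ i k : ℕ, i ≤ k → u k - u i = ∑ s ∈ Finset.Ioc i k, v s := by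
    intro i k hik
    rw [hu' i, hu' k, ← Finset.sum_Ioc_consecutive v (Nat.zero_le i) hik]
    ring
  have hcd : ∀ i k : ℕ, i ≤ k → c k - c i = lam * ((k : ℝ) - i) := by
    intro i k hik
    rw [hc, hc]; ring
  have main : ∀ j, K < j → j ≤ N → (u j - u (j - 1)) / (c j - c (j - 1)) < C := by
    intro j hKj _
    have hj1 : j - 1 ≤ j := Nat.sub_le _ _
    have hjpos : 1 ≤ j := by omega
    have hIoc : Finset.Ioc (j - 1) j = {j} := by
      ext x; simp only [Finset.mem_Ioc, Finset.mem_singleton]; omega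
    have hud : u j - u (j - 1) = v j := by
      rw [hdiff _ _ hj1, hIoc, Finset.sum_singleton]
    have hcast : ((j : ℝ) - (j - 1 : ℕ)) = 1 := by
      rw [Nat.cast_sub hjpos]; push_cast; ring
    have hcd' : c j - c (j - 1) = lam := by
      rw [hcd _ _ hj1, hcast, mul_one]
    rw [hud, hcd', hC]
    gcongr
    exact v_anti v hv K j hK hKj
  refine ⟨main, ⟨⟨hK, le_of_lt hKN, ?_⟩, ?_⟩⟩
  · -- K is marked
    intro i hi hiK
    have hik : i ≤ K := le_of_lt hiK
    have hud : u K - u i = ∑ s ∈ Finset.Ioc i K, v s := hdiff _ _ hik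
    have hlb : ((K - i : ℕ) : ℝ) * v K ≤ ∑ s ∈ Finset.Ioc i K, v s := by
      have := Finset.card_nsmul_le_sum (Finset.Ioc i K) v (v K) ?_
      · simpa [Nat.card_Ioc, nsmul_eq_mul] using this
      · intro s hs
        simp only [Finset.mem_Ioc] at hs
        rcases eq_or_lt_of_le hs.2 with h | h
        · subst h; exact le_refl _
        · exact le_of_lt (v_anti v hv s K (by omega) h)
    have hdpos : (0 : ℝ) < (K : ℝ) - i := by
      have : (i : ℝ) < K := by exact_mod_cast hiK
      linarith
    have hcast : ((K - i : ℕ) : ℝ) = (K : ℝ) - i := by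
      rw [Nat.cast_sub hik]
    rw [hud, hcd _ _ hik, hC]
    rw [div_le_div_iff₀ hlam (by positivity)]
    rw [hcast] at hlb
    calc v K * (lam * ((K:ℝ) - i)) = (((K:ℝ) - i) * v K) * lam := by ring
      _ ≤ (∑ s ∈ Finset.Ioc i K, v s) * lam := by
          exact mul_le_mul_of_nonneg_right hlb (le_of_lt hlam)
  · -- K is an upper bound
    intro j hj
    by_contra h
    push_neg at h
    have hKj : K < j := h
    have := hj.2.2 (j - 1) (by omega) (by omega)
    exact absurd (main j hKj hj.2.1) (not_lt.mpr this)
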